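/- Fix real parameters α, β ≥ 0 and a, and real times t₁ < t₂. Let u, l, π : ℝ × ℝ → ℝ be smooth with u(·,t), π(·,t) 2π-periodic, l(x+2π,t) = l(x,t) + 2π, and l_x > 0 everywhere, and define the Clebsch action S[u,l,π] := ∫_{t₁}^{t₂} ∫₀^{2π} [ (α/2)u² + (β/2)u_x² + (a/2) u_x l_xx/l_x + π(l_t + u l_x) ] dx dt. Suppose (u,l,π) satisfies: (i) αu − β u_xx = −π l_x + (a/2) ∂_x(l_xx/l_x); (ii) l_t + u l_x = 0; (iii) π_t + ∂_x(π u − (a/2) u_xx/l_x) = 0. Then for all smooth variations δu, δπ, δl : ℝ × ℝ → ℝ that are 2π-periodic in x, with δl(x,t₁) = δl(x,t₂) = 0 for all x, the Gateaux derivative vanishes: d/dε|_{ε=0} S[u + ε δu, l + ε δl, π + ε δπ] = 0. -/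

import Mathlib

open MeasureTheory intervalIntegral Metric Set Filter Topology


/-- Partial derivative in the first (spatial) variable. -/
noncomputable def px (f : ℝ → ℝ → ℝ) : ℝ → ℝ → ℝ := fun x t => deriv (fun y => f y t) x

/-- Partial derivative in the second (time) variable. -/
noncomputable def pt (f : ℝ → ℝ → ℝ) : ℝ → ℝ → ℝ := fun x t => deriv (fun s => f x s) t

def Sm (f : ℝ → ℝ → ℝ) : Prop := ContDiff ℝ (⊤ : ℕ∞) (fun p : ℝ × ℝ => f p.1 p.2)

namespace Sm

variable {f g : ℝ → ℝ → ℝ}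

theorem sliceX (hf : Sm f) (t : ℝ) : ContDiff ℝ (⊤ : ℕ∞) (fun y => f y t) :=
  hf.comp (contDiff_id.prodMk contDiff_const)

theorem sliceT (hf : Sm f) (x : ℝ) : ContDiff ℝ (⊤ : ℕ∞) (fun s => f x s) :=
  hf.comp (contDiff_const.prodMk contDiff_id)

theorem hasDerivAt_px (hf : Sm f) (x t : ℝ) :
    HasDerivAt (fun y => f y t) (px f x t) x :=
  (((hf.sliceX t).differentiable (by simp)) x).hasDerivAt

theorem hasDerivAt_pt (hf : Sm f) (x t : ℝ) :
    HasDerivAt (fun s => f x s) (pt f x t) t :=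
  (((hf.sliceT x).differentiable (by simp)) t).hasDerivAt

theorem px_eq_fderiv (hf : Sm f) (p : ℝ × ℝ) :
    px f p.1 p.2 = fderiv ℝ (fun q : ℝ × ℝ => f q.1 q.2) p (1, 0) := by
  have hd : HasFDerivAt (fun q : ℝ × ℝ => f q.1 q.2)
      (fderiv ℝ (fun q : ℝ × ℝ => f q.1 q.2) p) p :=
    ((hf.differentiable (by simp)) p).hasFDerivAt
  have hline : HasDerivAt (fun y : ℝ => ((y, p.2) : ℝ × ℝ)) ((1 : ℝ), (0 : ℝ)) p.1 :=
    HasDerivAt.prodMk (hasDerivAt_id _) (hasDerivAt_const _ _)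
  have := hd.comp_hasDerivAt p.1 hline
  exact ((hf.hasDerivAt_px p.1 p.2).unique this)

theorem pt_eq_fderiv (hf : Sm f) (p : ℝ × ℝ) :
    pt f p.1 p.2 = fderiv ℝ (fun q : ℝ × ℝ => f q.1 q.2) p (0, 1) := by
  have hd : HasFDerivAt (fun q : ℝ × ℝ => f q.1 q.2)
      (fderiv ℝ (fun q : ℝ × ℝ => f q.1 q.2) p) p :=
    ((hf.differentiable (by simp)) p).hasFDerivAt
  have hline : HasDerivAt (fun s : ℝ => ((p.1, s) : ℝ × ℝ)) ((0 : ℝ), (1 : ℝ)) p.2 :=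
    HasDerivAt.prodMk (hasDerivAt_const _ _) (hasDerivAt_id _)
  have := hd.comp_hasDerivAt p.2 hline
  exact ((hf.hasDerivAt_pt p.1 p.2).unique this)

protected theorem px (hf : Sm f) : Sm (px f) := by
  have : (fun p : ℝ × ℝ => px f p.1 p.2)
      = fun p : ℝ × ℝ => fderiv ℝ (fun q : ℝ × ℝ => f q.1 q.2) p (1, 0) :=
    funext fun p => hf.px_eq_fderiv p
  rw [Sm, this]
  exact (hf.fderiv_right (by simp)).clm_apply contDiff_const

protected theorem pt (hf : Sm f) : Sm (pt f) := by
  have : (fun p : ℝ × ℝ => pt f p.1 p.2)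
      = fun p : ℝ × ℝ => fderiv ℝ (fun q : ℝ × ℝ => f q.1 q.2) p (0, 1) :=
    funext fun p => hf.pt_eq_fderiv p
  rw [Sm, this]
  exact (hf.fderiv_right (by simp)).clm_apply contDiff_const

theorem cont (hf : Sm f) : Continuous (fun p : ℝ × ℝ => f p.1 p.2) :=
  ContDiff.continuous (n := (⊤ : ℕ∞)) hf

theorem contX (hf : Sm f) (t : ℝ) : Continuous (fun y => f y t) :=
  ContDiff.continuous (n := (⊤ : ℕ∞)) (hf.sliceX t)

theorem contT (hf : Sm f) (x : ℝ) : Continuous (fun s => f x s) :=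
  ContDiff.continuous (n := (⊤ : ℕ∞)) (hf.sliceT x)

end Sm

theorem px_periodic {f : ℝ → ℝ → ℝ} (hf : Sm f) (T k : ℝ)
    (hper : ∀ x t, f (x + T) t = f x t + k) :
    ∀ x t, px f (x + T) t = px f x t := by
  intro x t
  have h := hf.hasDerivAt_px x t
  have h1 : HasDerivAt (fun y : ℝ => f (y - T) t + k) (px f x t) (x + T) := by
    have hid : HasDerivAt (fun y : ℝ => y - T) (1 : ℝ) (x + T) := by
      simpa using (hasDerivAt_id (x + T)).sub_const T
    have hcomp := HasDerivAt.scomp (x + T) (by simpa using h) hid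
    simpa using hcomp.add_const k
  have h2 : (fun y : ℝ => f (y - T) t + k) = fun y => f y t := by
    funext y
    have := hper (y - T) t
    simp only [sub_add_cancel] at this
    rw [← this]
  rw [h2] at h1
  exact ((hf.hasDerivAt_px (x + T) t).unique h1)

/-- The Clebsch action
`S[u,l,π] = ∫_{t₁}^{t₂}∫₀^{2π} [(α/2)u² + (β/2)u_x² + (a/2)u_x l_xx/l_x + π(l_t + u l_x)] dx dt`. -/
noncomputable def ClebschAction (α β a t₁ t₂ : ℝ) (u l pr : ℝ → ℝ → ℝ) : ℝ :=
  ∫ t in t₁..t₂, ∫ x in (0:ℝ)..(2 * Real.pi),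
    (α / 2 * (u x t) ^ 2 + β / 2 * (px u x t) ^ 2
      + a / 2 * (px u x t * px (px l) x t / px l x t)
      + pr x t * (pt l x t + u x t * px l x t))

section defs
variable (α β a : ℝ) (u l pr du dl dpr : ℝ → ℝ → ℝ) (c : ℝ)

/-- regularized denominator -/
noncomputable def den (e x t : ℝ) : ℝ := max (px l x t + e * px dl x t) (c / 2)

/-- regularized perturbed integrand -/
noncomputable def gg (e x t : ℝ) : ℝ :=
  α / 2 * (u x t + e * du x t) ^ 2 + β / 2 * (px u x t + e * px du x t) ^ 2
    + a / 2 * ((px u x t + e * px du x t) * (px (px l) x t + e * px (px dl) x t)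
        / den l dl c e x t)
    + (pr x t + e * dpr x t) * ((pt l x t + e * pt dl x t)
        + (u x t + e * du x t) * (px l x t + e * px dl x t))

/-- ε-derivative of the regularized integrand -/
noncomputable def gg' (e x t : ℝ) : ℝ :=
  α * (u x t + e * du x t) * du x t + β * (px u x t + e * px du x t) * px du x t
    + a / 2 * (((px du x t * (px (px l) x t + e * px (px dl) x t)
          + (px u x t + e * px du x t) * px (px dl) x t) * den l dl c e x t
          - (px u x t + e * px du x t) * (px (px l) x t + e * px (px dl) x t) * px dl x t)
        / den l dl c e x t ^ 2)
    + dpr x t * ((pt l x t + e * pt dl x t)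
        + (u x t + e * du x t) * (px l x t + e * px dl x t))
    + (pr x t + e * dpr x t) * (pt dl x t + du x t * (px l x t + e * px dl x t)
        + (u x t + e * du x t) * px dl x t)

/-- first variation integrand. -/
noncomputable def G0 (x t : ℝ) : ℝ :=
  α * u x t * du x t + β * px u x t * px du x t
    + a / 2 * (((px du x t * px (px l) x t + px u x t * px (px dl) x t) * px l x t
          - px u x t * px (px l) x t * px dl x t) / px l x t ^ 2)
    + dpr x t * (pt l x t + u x t * px l x t)
    + pr x t * (pt dl x t + du x t * px l x t + u x t * px dl x t)

/-- boundary flux in x -/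
noncomputable def PP (x t : ℝ) : ℝ :=
  β * px u x t * du x t + a / 2 * (du x t * (px (px l) x t / px l x t))
    + a / 2 * (px u x t / px l x t) * px dl x t
    + (pr x t * u x t - a / 2 * px (px u) x t / px l x t) * dl x t

/-- boundary flux in t -/
noncomputable def QQ (x t : ℝ) : ℝ := pr x t * dl x t

end defs

theorem ibp_alg (a α β U DU UX DUX UXX LX LXX DLX DLXX DL DLT DPR PR PTPR R : ℝ)
    (hLX : LX ≠ 0) (e1 : α * U - β * UXX = (-PR) * LX + a / 2 * R) :
    α * U * DU + β * UX * DUX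
      + a / 2 * (((DUX * LXX + UX * DLXX) * LX - UX * LXX * DLX) / LX ^ 2)
      + DPR * 0 + PR * (DLT + DU * LX + U * DLX)
    = ((β * UXX * DU + β * UX * DUX)
      + (a / 2 * (DUX * (LXX / LX) + DU * R))
      + ((a / 2 * ((UXX * LX - UX * LXX) / LX ^ 2)) * DLX + (a / 2 * (UX / LX)) * DLXX)
      + ((-PTPR) * DL + (PR * U - a / 2 * UXX / LX) * DLX))
      + (PTPR * DL + PR * DLT) := by
  field_simp
  linear_combination (2 * DU * LX ^ 2) * e1


/-- Solutions of the Clebsch system (i)–(iii) are critical points of the Clebsch action: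
the Gateaux derivative of `S` in any admissible variation direction vanishes. -/
theorem stmt13 (α β a : ℝ) (hα : 0 ≤ α) (hβ : 0 ≤ β)
    (t₁ t₂ : ℝ) (ht : t₁ < t₂)
    (u l pr : ℝ → ℝ → ℝ)
    (hu : ContDiff ℝ (⊤ : ℕ∞) (fun p : ℝ × ℝ => u p.1 p.2))
    (hl : ContDiff ℝ (⊤ : ℕ∞) (fun p : ℝ × ℝ => l p.1 p.2))
    (hpr : ContDiff ℝ (⊤ : ℕ∞) (fun p : ℝ × ℝ => pr p.1 p.2))
    (huper : ∀ x t : ℝ, u (x + 2 * Real.pi) t = u x t)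
    (hprper : ∀ x t : ℝ, pr (x + 2 * Real.pi) t = pr x t)
    (hlper : ∀ x t : ℝ, l (x + 2 * Real.pi) t = l x t + 2 * Real.pi)
    (hlx : ∀ x t : ℝ, 0 < px l x t)
    (h1 : ∀ x t : ℝ, α * u x t - β * px (px u) x t
        = -(pr x t) * px l x t + (a / 2) * px (fun x t => px (px l) x t / px l x t) x t)
    (h2 : ∀ x t : ℝ, pt l x t + u x t * px l x t = 0)
    (h3 : ∀ x t : ℝ, pt pr x t
        + px (fun x t => pr x t * u x t - (a / 2) * px (px u) x t / px l x t) x t = 0) :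
    ∀ du dl dpr : ℝ → ℝ → ℝ,
      ContDiff ℝ (⊤ : ℕ∞) (fun p : ℝ × ℝ => du p.1 p.2) →
      ContDiff ℝ (⊤ : ℕ∞) (fun p : ℝ × ℝ => dl p.1 p.2) →
      ContDiff ℝ (⊤ : ℕ∞) (fun p : ℝ × ℝ => dpr p.1 p.2) →
      (∀ x t : ℝ, du (x + 2 * Real.pi) t = du x t) →
      (∀ x t : ℝ, dl (x + 2 * Real.pi) t = dl x t) →
      (∀ x t : ℝ, dpr (x + 2 * Real.pi) t = dpr x t) →
      (∀ x : ℝ, dl x t₁ = 0) → (∀ x : ℝ, dl x t₂ = 0) →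
      HasDerivAt (fun ε : ℝ =>
        ClebschAction α β a t₁ t₂
          (fun x t => u x t + ε * du x t)
          (fun x t => l x t + ε * dl x t)
          (fun x t => pr x t + ε * dpr x t)) 0 0 := by
  intro du dl dpr hdu hdl hdpr hduper hdlper hdprper hdl1 hdl2
  have Hu : Sm u := hu
  have Hl : Sm l := hl
  have Hpr : Sm pr := hpr
  have Hdu : Sm du := hdu
  have Hdl : Sm dl := hdl
  have Hdpr : Sm dpr := hdpr
  have pi_pos := Real.pi_pos
  set K : Set (ℝ × ℝ) := Icc (0:ℝ) (2 * Real.pi) ×ˢ Icc t₁ t₂ with hK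
  have hKc : IsCompact K := isCompact_Icc.prod isCompact_Icc
  have hKne : K.Nonempty := ⟨(0, t₁), by
    constructor
    · exact ⟨le_refl _, by positivity⟩
    · exact ⟨le_refl _, ht.le⟩⟩
  -- minimum of px l on K
  obtain ⟨p₀, hp₀K, hp₀min⟩ := hKc.exists_isMinOn hKne (Hl.px.cont.continuousOn)
  set c : ℝ := px l p₀.1 p₀.2 with hc_def
  have hc : 0 < c := hlx _ _
  have hcK : ∀ p ∈ K, c ≤ px l p.1 p.2 := fun p hp => hp₀min hp
  -- bound for px dl on K
  obtain ⟨M, hM⟩ := hKc.exists_bound_of_continuousOn (Hdl.px.cont.continuousOn)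
  have hM0 : 0 ≤ M := le_trans (norm_nonneg _) (hM p₀ hp₀K)
  set δ : ℝ := c / (2 * (M + 1)) with hδ_def
  have hδ : 0 < δ := by positivity
  -- key denominator bound
  have hkey : ∀ e x t, |e| < δ → (x, t) ∈ K → c / 2 < px l x t + e * px dl x t := by
    intro e x t he hxt
    have h1' : c ≤ px l x t := hcK (x, t) hxt
    have h2' : |px dl x t| ≤ M := by simpa [Real.norm_eq_abs] using hM (x, t) hxt
    have h3' : |e * px dl x t| ≤ |e| * M := by
      rw [abs_mul]; exact mul_le_mul_of_nonneg_left h2' (abs_nonneg e)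
    have h4' : |e| * M < δ * (M + 1) := by
      have := abs_nonneg e
      nlinarith
    have h5' : δ * (M + 1) = c / 2 := by rw [hδ_def]; field_simp
    have := neg_abs_le (e * px dl x t)
    nlinarith
  have hden_eq : ∀ e x t, |e| < δ → (x, t) ∈ K →
      den l dl c e x t = px l x t + e * px dl x t := by
    intro e x t he hxt
    exact max_eq_left (hkey e x t he hxt).le
  have hdenpos : ∀ e x t, 0 < den l dl c e x t :=
    fun e x t => lt_of_lt_of_le (by positivity) (le_max_right _ _)
  have base : ∀ f : ℝ → ℝ → ℝ, Sm f → Continuous fun q : ℝ × ℝ × ℝ => f q.2.1 q.2.2 :=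
    fun f hf => hf.cont.comp continuous_snd
  have cden : Continuous (fun q : ℝ × ℝ × ℝ => den l dl c q.1 q.2.1 q.2.2) :=
    ((base _ Hl.px).add (continuous_fst.mul (base _ Hdl.px))).max continuous_const
  have hne : ∀ q : ℝ × ℝ × ℝ, den l dl c q.1 q.2.1 q.2.2 ≠ 0 := fun q => (hdenpos _ _ _).ne'
  have cA : Continuous fun q : ℝ × ℝ × ℝ => u q.2.1 q.2.2 + q.1 * du q.2.1 q.2.2 :=
    (base _ Hu).add (continuous_fst.mul (base _ Hdu))
  have cAx : Continuous fun q : ℝ × ℝ × ℝ => px u q.2.1 q.2.2 + q.1 * px du q.2.1 q.2.2 :=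
    (base _ Hu.px).add (continuous_fst.mul (base _ Hdu.px))
  have cLxx : Continuous fun q : ℝ × ℝ × ℝ => px (px l) q.2.1 q.2.2 + q.1 * px (px dl) q.2.1 q.2.2 :=
    (base _ Hl.px.px).add (continuous_fst.mul (base _ Hdl.px.px))
  have cLx : Continuous fun q : ℝ × ℝ × ℝ => px l q.2.1 q.2.2 + q.1 * px dl q.2.1 q.2.2 :=
    (base _ Hl.px).add (continuous_fst.mul (base _ Hdl.px))
  have cLt : Continuous fun q : ℝ × ℝ × ℝ => pt l q.2.1 q.2.2 + q.1 * pt dl q.2.1 q.2.2 :=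
    (base _ Hl.pt).add (continuous_fst.mul (base _ Hdl.pt))
  have cPr : Continuous fun q : ℝ × ℝ × ℝ => pr q.2.1 q.2.2 + q.1 * dpr q.2.1 q.2.2 :=
    (base _ Hpr).add (continuous_fst.mul (base _ Hdpr))
  have hggcont : Continuous (fun q : ℝ × ℝ × ℝ => gg α β a u l pr du dl dpr c q.1 q.2.1 q.2.2) := by
    unfold gg
    exact (((continuous_const.mul (cA.pow 2)).add (continuous_const.mul (cAx.pow 2))).add
      (continuous_const.mul ((cAx.mul cLxx).div cden hne))).add (cPr.mul (cLt.add (cA.mul cLx)))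
  have hgg'cont : Continuous (fun q : ℝ × ℝ × ℝ => gg' α β a u l pr du dl dpr c q.1 q.2.1 q.2.2) := by
    unfold gg'
    have cnum : Continuous fun q : ℝ × ℝ × ℝ =>
        (px du q.2.1 q.2.2 * (px (px l) q.2.1 q.2.2 + q.1 * px (px dl) q.2.1 q.2.2)
          + (px u q.2.1 q.2.2 + q.1 * px du q.2.1 q.2.2) * px (px dl) q.2.1 q.2.2) * den l dl c q.1 q.2.1 q.2.2
          - (px u q.2.1 q.2.2 + q.1 * px du q.2.1 q.2.2)
            * (px (px l) q.2.1 q.2.2 + q.1 * px (px dl) q.2.1 q.2.2) * px dl q.2.1 q.2.2 :=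
      ((((base _ Hdu.px).mul cLxx).add (cAx.mul (base _ Hdl.px.px))).mul cden).sub
        ((cAx.mul cLxx).mul (base _ Hdl.px))
    exact (((((continuous_const.mul cA).mul (base _ Hdu)).add
      ((continuous_const.mul cAx).mul (base _ Hdu.px))).add
      (continuous_const.mul (cnum.div (cden.pow 2) (fun q => pow_ne_zero 2 (hne q))))).add
      ((base _ Hdpr).mul (cLt.add (cA.mul cLx)))).add
      (cPr.mul (((base _ Hdl.pt).add ((base _ Hdu).mul cLx)).add (cA.mul (base _ Hdl.px))))
  obtain ⟨Mb, hMb⟩ := ((isCompact_Icc (a := -δ) (b := δ)).prod hKc).exists_bound_of_continuousOn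
    hgg'cont.continuousOn
  have hlin : ∀ (e A B : ℝ), HasDerivAt (fun e' : ℝ => A + e' * B) B e := fun e A B => by
    simpa using ((hasDerivAt_id e).mul_const B).const_add A
  have hDeriv : ∀ e x t, |e| < δ → (x, t) ∈ K →
      HasDerivAt (fun e' => gg α β a u l pr du dl dpr c e' x t)
        (gg' α β a u l pr du dl dpr c e x t) e := by
    intro e x t he hxt
    have hA := hlin e (u x t) (du x t)
    have hAx := hlin e (px u x t) (px du x t)
    have hLxx := hlin e (px (px l) x t) (px (px dl) x t)
    have hLx := hlin e (px l x t) (px dl x t)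
    have hLt := hlin e (pt l x t) (pt dl x t)
    have hPr := hlin e (pr x t) (dpr x t)
    have hLxne : (px l x t + e * px dl x t) ≠ 0 :=
      (lt_trans (by positivity) (hkey e x t he hxt)).ne'
    have hev : ∀ᶠ e' in 𝓝 e, |e'| < δ :=
      (isOpen_lt continuous_abs continuous_const).eventually_mem he
    have htrue : HasDerivAt (fun e' =>
        α / 2 * (u x t + e' * du x t) ^ 2 + β / 2 * (px u x t + e' * px du x t) ^ 2
          + a / 2 * ((px u x t + e' * px du x t) * (px (px l) x t + e' * px (px dl) x t)
              / (px l x t + e' * px dl x t))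
          + (pr x t + e' * dpr x t) * ((pt l x t + e' * pt dl x t)
              + (u x t + e' * du x t) * (px l x t + e' * px dl x t)))
        (gg' α β a u l pr du dl dpr c e x t) e := by
      have h' := ((((hA.pow 2).const_mul (α / 2)).add
          ((hAx.pow 2).const_mul (β / 2))).add
          (((hAx.mul hLxx).div hLx hLxne).const_mul (a / 2))).add
          (hPr.mul (hLt.add (hA.mul hLx)))
      refine h'.congr_deriv ?_
      · unfold gg'
        rw [hden_eq e x t he hxt]
        simp only [Pi.mul_apply, Pi.add_apply]
        ring
    exact htrue.congr_of_eventuallyEq (hev.mono fun e' h => by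
      simp only [gg, hden_eq e' x t h hxt])
  have hsubI : uIoc (0:ℝ) (2 * Real.pi) ⊆ Icc (0:ℝ) (2 * Real.pi) := by
    rw [uIoc_of_le (by positivity)]; exact Ioc_subset_Icc_self
  have hsubT : uIoc t₁ t₂ ⊆ Icc t₁ t₂ := by rw [uIoc_of_le ht.le]; exact Ioc_subset_Icc_self
  have contXgg : ∀ e' t', Continuous fun x => gg α β a u l pr du dl dpr c e' x t' := by
    intro e' t'
    exact hggcont.comp
      (Continuous.prodMk continuous_const (Continuous.prodMk continuous_id continuous_const))
  have contXgg' : ∀ e' t', Continuous fun x => gg' α β a u l pr du dl dpr c e' x t' := by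
    intro e' t'
    exact hgg'cont.comp
      (Continuous.prodMk continuous_const (Continuous.prodMk continuous_id continuous_const))
  have contTgg : ∀ e',
      Continuous fun t' => ∫ x in (0:ℝ)..(2 * Real.pi), gg α β a u l pr du dl dpr c e' x t' := by
    intro e'
    exact continuous_parametric_intervalIntegral_of_continuous'
      (f := fun t' x => gg α β a u l pr du dl dpr c e' x t')
      (hggcont.comp
        (Continuous.prodMk continuous_const (Continuous.prodMk continuous_snd continuous_fst))) _ _
  have contTgg' : ∀ e',
      Continuous fun t' => ∫ x in (0:ℝ)..(2 * Real.pi), gg' α β a u l pr du dl dpr c e' x t' := by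
    intro e'
    exact continuous_parametric_intervalIntegral_of_continuous'
      (f := fun t' x => gg' α β a u l pr du dl dpr c e' x t')
      (hgg'cont.comp
        (Continuous.prodMk continuous_const (Continuous.prodMk continuous_snd continuous_fst))) _ _
  have hball : ∀ e e' : ℝ, |e| < δ / 2 → e' ∈ ball e (δ / 2) → |e'| < δ := by
    intro e e' he h'
    have hd : |e' - e| < δ / 2 := by simpa [Real.dist_eq] using h'
    calc |e'| = |e' - e + e| := by ring_nf
    _ ≤ |e' - e| + |e| := abs_add_le _ _
    _ < δ := by linarith
  have hInner : ∀ e t, |e| < δ / 2 → t ∈ Icc t₁ t₂ →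
      HasDerivAt (fun e' => ∫ x in (0:ℝ)..(2 * Real.pi), gg α β a u l pr du dl dpr c e' x t)
        (∫ x in (0:ℝ)..(2 * Real.pi), gg' α β a u l pr du dl dpr c e x t) e := by
    intro e t he htK
    refine (intervalIntegral.hasDerivAt_integral_of_dominated_loc_of_deriv_le
      (F := fun e' x => gg α β a u l pr du dl dpr c e' x t)
      (F' := fun e' x => gg' α β a u l pr du dl dpr c e' x t)
      (bound := fun _ => Mb) (ball_mem_nhds e (half_pos hδ)) ?_ ?_ ?_ ?_ ?_ ?_).2
    · exact Eventually.of_forall fun e' => (contXgg e' t).aestronglyMeasurable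
    · exact (contXgg e t).intervalIntegrable _ _
    · exact (contXgg' e t).aestronglyMeasurable
    · refine Eventually.of_forall fun x hx e' he' => ?_
      exact hMb (e', (x, t)) ⟨abs_le.mp (hball e e' he he').le, hsubI hx, htK⟩
    · exact intervalIntegrable_const
    · refine Eventually.of_forall fun x hx e' he' => ?_
      exact hDeriv e' x t (hball e e' he he') ⟨hsubI hx, htK⟩
  have hOuter : HasDerivAt
      (fun e => ∫ t in t₁..t₂, ∫ x in (0:ℝ)..(2 * Real.pi), gg α β a u l pr du dl dpr c e x t)
      (∫ t in t₁..t₂, ∫ x in (0:ℝ)..(2 * Real.pi), gg' α β a u l pr du dl dpr c 0 x t) 0 := by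
    refine (intervalIntegral.hasDerivAt_integral_of_dominated_loc_of_deriv_le
      (F := fun e t => ∫ x in (0:ℝ)..(2 * Real.pi), gg α β a u l pr du dl dpr c e x t)
      (F' := fun e t => ∫ x in (0:ℝ)..(2 * Real.pi), gg' α β a u l pr du dl dpr c e x t)
      (bound := fun _ => Mb * |2 * Real.pi - 0|) (ball_mem_nhds 0 (half_pos (half_pos hδ))) ?_ ?_ ?_ ?_ ?_ ?_).2
    · exact Eventually.of_forall fun e => (contTgg e).aestronglyMeasurable
    · exact (contTgg 0).intervalIntegrable _ _
    · exact (contTgg' 0).aestronglyMeasurable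
    · refine Eventually.of_forall fun t htmem e he => ?_
      refine intervalIntegral.norm_integral_le_of_norm_le_const fun x hx => ?_
      have he' : |e| < δ := by
        have : |e| < δ / 2 / 2 := by simpa [Real.dist_eq] using he
        linarith
      exact hMb (e, (x, t)) ⟨abs_le.mp he'.le, hsubI hx, hsubT htmem⟩
    · exact intervalIntegrable_const
    · refine Eventually.of_forall fun t htmem e he => ?_
      have he' : |e| < δ / 2 := by
        have : |e| < δ / 2 / 2 := by simpa [Real.dist_eq] using he
        linarith
      exact hInner e t he' (hsubT htmem)
  -- pointwise rewriting of the perturbed action integrand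
  have hlxne : ∀ x t, px l x t ≠ 0 := fun x t => (hlx x t).ne'
  have hpxU : ∀ e x t, px (fun x t => u x t + e * du x t) x t = px u x t + e * px du x t :=
    fun e x t => ((Hu.hasDerivAt_px x t).add ((Hdu.hasDerivAt_px x t).const_mul e)).deriv
  have hpxL : ∀ e x t, px (fun x t => l x t + e * dl x t) x t = px l x t + e * px dl x t :=
    fun e x t => ((Hl.hasDerivAt_px x t).add ((Hdl.hasDerivAt_px x t).const_mul e)).deriv
  have hptL : ∀ e x t, pt (fun x t => l x t + e * dl x t) x t = pt l x t + e * pt dl x t :=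
    fun e x t => ((Hl.hasDerivAt_pt x t).add ((Hdl.hasDerivAt_pt x t).const_mul e)).deriv
  have hpxL_fun : ∀ e : ℝ, px (fun x t => l x t + e * dl x t)
      = fun x t => px l x t + e * px dl x t :=
    fun e => funext fun x => funext fun t => hpxL e x t
  have hpxxL : ∀ e x t, px (px (fun x t => l x t + e * dl x t)) x t
      = px (px l) x t + e * px (px dl) x t := by
    intro e x t
    rw [hpxL_fun e]
    exact ((Hl.px.hasDerivAt_px x t).add ((Hdl.px.hasDerivAt_px x t).const_mul e)).deriv
  have hActionEq : ∀ e : ℝ, |e| < δ →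
      ClebschAction α β a t₁ t₂
        (fun x t => u x t + e * du x t)
        (fun x t => l x t + e * dl x t)
        (fun x t => pr x t + e * dpr x t)
      = ∫ t in t₁..t₂, ∫ x in (0:ℝ)..(2 * Real.pi), gg α β a u l pr du dl dpr c e x t := by
    intro e he
    unfold ClebschAction
    refine intervalIntegral.integral_congr fun t htmem => ?_
    refine intervalIntegral.integral_congr fun x hxmem => ?_
    rw [uIcc_of_le ht.le] at htmem
    rw [uIcc_of_le (by positivity)] at hxmem
    have hxtK : (x, t) ∈ K := ⟨hxmem, htmem⟩
    simp only [gg, hpxU, hpxL_fun e, hpxxL, hptL, hden_eq e x t he hxtK]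
    have hb : px (fun x t => px l x t + e * px dl x t) x t = px (px l) x t + e * px (px dl) x t :=
      ((Hl.px.hasDerivAt_px x t).add ((Hdl.px.hasDerivAt_px x t).const_mul e)).deriv
    rw [hb]
  -- the first-variation integrand identity (integration by parts, pointwise form)
  have hIBP : ∀ x t, G0 α β a u l pr du dl dpr x t
      = px (PP β a u l pr du dl) x t + pt (QQ pr dl) x t := by
    intro x t
    have h_u := Hu.hasDerivAt_px x t
    have h_du := Hdu.hasDerivAt_px x t
    have h_dl := Hdl.hasDerivAt_px x t
    have h_pr := Hpr.hasDerivAt_px x t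
    have h_ux := Hu.px.hasDerivAt_px x t
    have h_uxx := Hu.px.px.hasDerivAt_px x t
    have h_lx := Hl.px.hasDerivAt_px x t
    have h_lxx := Hl.px.px.hasDerivAt_px x t
    have h_dlx := Hdl.px.hasDerivAt_px x t
    have hne := hlxne x t
    have hR : HasDerivAt (fun y => px (px l) y t / px l y t)
        (px (fun x t => px (px l) x t / px l x t) x t) x :=
      (h_lxx.differentiableAt.div h_lx.differentiableAt hne).hasDerivAt
    have hW : HasDerivAt (fun y => pr y t * u y t - a / 2 * px (px u) y t / px l y t)
        (px (fun x t => pr x t * u x t - (a / 2) * px (px u) x t / px l x t) x t) x :=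
      ((h_pr.differentiableAt.mul h_u.differentiableAt).sub
        ((h_uxx.differentiableAt.const_mul (a / 2)).div h_lx.differentiableAt hne)).hasDerivAt
    have hQx := h_ux.div h_lx hne
    have hPP : HasDerivAt (fun y => PP β a u l pr du dl y t)
        ((β * px (px u) x t * du x t + β * px u x t * px du x t)
          + a / 2 * (px du x t * (px (px l) x t / px l x t)
              + du x t * px (fun x t => px (px l) x t / px l x t) x t)
          + ((a / 2 * ((px (px u) x t * px l x t - px u x t * px (px l) x t) / px l x t ^ 2))
                * px dl x t
              + (a / 2 * (px u x t / px l x t)) * px (px dl) x t)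
          + (px (fun x t => pr x t * u x t - (a / 2) * px (px u) x t / px l x t) x t * dl x t
              + (pr x t * u x t - a / 2 * px (px u) x t / px l x t) * px dl x t)) x := by
      unfold PP
      exact ((((h_ux.const_mul β).mul h_du).add ((h_du.mul hR).const_mul (a / 2))).add
        ((hQx.const_mul (a / 2)).mul h_dlx)).add (hW.mul h_dl)
    have hPPeq : px (PP β a u l pr du dl) x t = _ := hPP.deriv
    have hQQeq : pt (QQ pr dl) x t = pt pr x t * dl x t + pr x t * pt dl x t := by
      have h : HasDerivAt (fun s => QQ pr dl x s) (pt pr x t * dl x t + pr x t * pt dl x t) t := by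
        unfold QQ
        exact (Hpr.hasDerivAt_pt x t).mul (Hdl.hasDerivAt_pt x t)
      exact h.deriv
    rw [hPPeq, hQQeq]
    unfold G0
    rw [h2 x t]
    have e3' : px (fun x t => pr x t * u x t - (a / 2) * px (px u) x t / px l x t) x t
        = -pt pr x t := by linarith [h3 x t]
    rw [e3']
    exact ibp_alg a α β (u x t) (du x t) (px u x t) (px du x t) (px (px u) x t) (px l x t)
      (px (px l) x t) (px dl x t) (px (px dl) x t) (dl x t) (pt dl x t) (dpr x t) (pr x t)
      (pt pr x t) (px (fun x t => px (px l) x t / px l x t) x t) hne (h1 x t)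
  -- smoothness of the fluxes
  have HPP : Sm (PP β a u l pr du dl) := by
    unfold Sm PP
    exact ((((contDiff_const.mul Hu.px).mul Hdu).add
      (contDiff_const.mul (Hdu.mul (Hl.px.px.div Hl.px fun p => hlxne p.1 p.2)))).add
      ((contDiff_const.mul (Hu.px.div Hl.px fun p => hlxne p.1 p.2)).mul Hdl.px)).add
      (((Hpr.mul Hu).sub ((contDiff_const.mul Hu.px.px).div Hl.px fun p => hlxne p.1 p.2)).mul Hdl)
  have HQQ : Sm (QQ pr dl) := by
    unfold Sm QQ
    exact Hpr.mul Hdl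
  -- periodicity of PP
  have huxper := px_periodic Hu (2 * Real.pi) 0 (fun x t => by rw [huper x t, add_zero])
  have hduper' := px_periodic Hdu (2 * Real.pi) 0 (fun x t => by rw [hduper x t, add_zero])
  have hdlper' := px_periodic Hdl (2 * Real.pi) 0 (fun x t => by rw [hdlper x t, add_zero])
  have hlxper := px_periodic Hl (2 * Real.pi) (2 * Real.pi) hlper
  have huxxper := px_periodic Hu.px (2 * Real.pi) 0 (fun x t => by rw [huxper x t, add_zero])
  have hlxxper := px_periodic Hl.px (2 * Real.pi) 0 (fun x t => by rw [hlxper x t, add_zero])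
  have hdlxper := px_periodic Hdl.px (2 * Real.pi) 0 (fun x t => by rw [hdlper' x t, add_zero])
  have hPPper : ∀ x t, PP β a u l pr du dl (x + 2 * Real.pi) t = PP β a u l pr du dl x t := by
    intro x t
    unfold PP
    rw [huxper, hduper, hdlper, hlxxper, hlxper, hdlper', hprper, huper, huxxper]
  -- FTC step in x
  have hxint : ∀ t, ∫ x in (0:ℝ)..(2 * Real.pi), px (PP β a u l pr du dl) x t = 0 := by
    intro t
    rw [intervalIntegral.integral_eq_sub_of_hasDerivAt
      (f := fun y => PP β a u l pr du dl y t)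
      (fun x _ => HPP.hasDerivAt_px x t)
      ((HPP.px.contX t).intervalIntegrable _ _)]
    have := hPPper 0 t
    rw [zero_add] at this
    rw [this, sub_self]
  -- Fubini step in t
  have hQzero : (∫ t in t₁..t₂, ∫ x in (0:ℝ)..(2 * Real.pi), pt (QQ pr dl) x t) = 0 := by
    have hcont : Continuous fun q : ℝ × ℝ => pt (QQ pr dl) q.2 q.1 :=
      HQQ.pt.cont.comp (continuous_snd.prodMk continuous_fst)
    have hint : Integrable (Function.uncurry fun t x => pt (QQ pr dl) x t)
        ((volume.restrict (Ioc t₁ t₂)).prod (volume.restrict (Ioc (0:ℝ) (2 * Real.pi)))) := by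
      rw [Measure.prod_restrict, ← Measure.volume_eq_prod]
      refine IntegrableOn.mono_set ?_ (prod_mono Ioc_subset_Icc_self Ioc_subset_Icc_self)
      exact hcont.continuousOn.integrableOn_compact (isCompact_Icc.prod isCompact_Icc)
    have hswap := MeasureTheory.integral_integral_swap hint
    rw [intervalIntegral.integral_of_le ht.le]
    have hix : ∀ t, (∫ x in (0:ℝ)..(2 * Real.pi), pt (QQ pr dl) x t)
        = ∫ x in Ioc (0:ℝ) (2 * Real.pi), pt (QQ pr dl) x t :=
      fun t => intervalIntegral.integral_of_le (by positivity)
    simp_rw [hix]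
    rw [hswap]
    have hit : ∀ x, (∫ t in Ioc t₁ t₂, pt (QQ pr dl) x t) = 0 := by
      intro x
      rw [← intervalIntegral.integral_of_le ht.le]
      rw [intervalIntegral.integral_eq_sub_of_hasDerivAt
        (f := fun s => QQ pr dl x s)
        (fun s _ => HQQ.hasDerivAt_pt x s)
        ((HQQ.pt.contT x).intervalIntegrable _ _)]
      unfold QQ
      rw [hdl1 x, hdl2 x, mul_zero, mul_zero, sub_self]
    simp_rw [hit]
    simp
  -- the derivative value vanishes
  have hval : (∫ t in t₁..t₂, ∫ x in (0:ℝ)..(2 * Real.pi),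
      gg' α β a u l pr du dl dpr c 0 x t) = 0 := by
    have hgg'0 : ∀ x t, (x, t) ∈ K → gg' α β a u l pr du dl dpr c 0 x t
        = G0 α β a u l pr du dl dpr x t := by
      intro x t hxt
      unfold gg' G0
      rw [hden_eq 0 x t (by simpa using hδ) hxt]
      ring
    have hinner : ∀ t, t ∈ uIcc t₁ t₂ →
        (∫ x in (0:ℝ)..(2 * Real.pi), gg' α β a u l pr du dl dpr c 0 x t)
        = ∫ x in (0:ℝ)..(2 * Real.pi), pt (QQ pr dl) x t := by
      intro t htmem
      rw [uIcc_of_le ht.le] at htmem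
      have step1 : (∫ x in (0:ℝ)..(2 * Real.pi), gg' α β a u l pr du dl dpr c 0 x t)
          = ∫ x in (0:ℝ)..(2 * Real.pi),
              (px (PP β a u l pr du dl) x t + pt (QQ pr dl) x t) := by
        refine intervalIntegral.integral_congr fun x hxmem => ?_
        rw [uIcc_of_le (by positivity)] at hxmem
        rw [hgg'0 x t ⟨hxmem, htmem⟩, hIBP x t]
      rw [step1, intervalIntegral.integral_add
        ((HPP.px.contX t).intervalIntegrable _ _) ((HQQ.pt.contX t).intervalIntegrable _ _),
        hxint t, zero_add]
    rw [intervalIntegral.integral_congr fun t htmem => hinner t htmem]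
    exact hQzero
  -- conclusion
  have hfin := hOuter
  rw [hval] at hfin
  refine hfin.congr_of_eventuallyEq ?_
  have hev0 : ∀ᶠ e in 𝓝 (0:ℝ), |e| < δ :=
    (isOpen_lt continuous_abs continuous_const).eventually_mem (by simpa using hδ)
  exact hev0.mono fun e he => hActionEq e he
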